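/- arXiv:1312.4798 — 5 statements merged into one kernel-verified Lean document; each statement's English description precedes it below -/
import Mathlib

section
/- Let N ≥ 1, let γ_l > 0 for l = 1,…,N be channel gains, s > 0 the slot length, W > 0 the bandwidth, e₁ ≥ 0 the initial energy, H_l ≥ 0 (2 ≤ l ≤ N) the energy arrivals, b₁ ≥ 0 the initial data, and B_l ≥ 0 (2 ≤ l ≤ N) the data arrivals. Then for every feasible power allocation ρ there exists a nondecreasing sequence of water levels w₁ ≤ w₂ ≤ … ≤ w_N (w_l ≥ 0) such that the induced allocation ρ'_l = max(w_l − 1/γ_l, 0) is feasible, its total throughput satisfies ∑_{l=1}^N s·W·log₂(1 + ρ'_l·γ_l) ≥ ∑_{l=1}^N s·W·log₂(1 + ρ_l·γ_l), and its total energy satisfies s·∑_{l=1}^N ρ'_l ≤ s·∑_{l=1}^N ρ_l. -/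
/-!
Induct on the number of slots. Given water levels for the first `N` slots, the slot `N + 1`
is added by capping all earlier levels at a common value `v` and giving the new slot the
level `v`, where `v` is chosen by the intermediate value theorem so that the total rate is
unchanged. Capping only lowers the prefix rates and energies. The total energy does not
grow because `v * log 2` is a subgradient of the convex energy-per-rate curve
`r ↦ (2 ^ r - 1) / γ` at every slot whose level was changed, all of which sit at level `v`:
the pooled slots reach the same total rate with no more energy.
-/

open Finset Real

noncomputable def levelPower (γ w : ℝ) : ℝ := max (w - 1 / γ) 0

noncomputable def rate (γ p : ℝ) : ℝ := logb 2 (1 + p * γ)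

lemma levelPower_nonneg (γ w : ℝ) : 0 ≤ levelPower γ w := le_max_right _ _

lemma levelPower_mono (γ : ℝ) : Monotone (levelPower γ) :=
  fun _ _ h => max_le_max (sub_le_sub_right h _) le_rfl

lemma levelPower_eq_zero {γ w : ℝ} (h : w ≤ 1 / γ) : levelPower γ w = 0 :=
  max_eq_right (sub_nonpos.2 h)

lemma levelPower_add_one_div {γ p : ℝ} (hp : 0 ≤ p) : levelPower γ (p + 1 / γ) = p := by
  simp [levelPower, hp]

lemma rate_le_rate {γ p q : ℝ} (hγ : 0 ≤ γ) (hp : 0 ≤ p) (hpq : p ≤ q) :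
    rate γ p ≤ rate γ q :=
  logb_le_logb_of_le one_lt_two (by positivity) (by gcongr)

lemma log_two_mul_rate (γ p : ℝ) : log 2 * rate γ p = log (1 + p * γ) :=
  mul_div_cancel₀ _ (log_pos one_lt_two).ne'

lemma monotone_rate_levelPower {γ : ℝ} (hγ : 0 ≤ γ) :
    Monotone fun w => rate γ (levelPower γ w) :=
  fun _ _ h => rate_le_rate hγ (levelPower_nonneg γ _) (levelPower_mono γ h)

lemma continuous_rate_levelPower {γ : ℝ} (hγ : 0 ≤ γ) :
    Continuous fun w => rate γ (levelPower γ w) :=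
  Continuous.logb (by unfold levelPower; fun_prop) fun w =>
    (add_pos_of_pos_of_nonneg one_pos (mul_nonneg (levelPower_nonneg γ w) hγ)).ne'

/-- The energy needed for rate `r` is `(2 ^ r - 1) / γ`, convex in `r`, and `v * log 2` is a
subgradient of it at the rate of level `v` (its derivative there if `1 / γ ≤ v`). -/
lemma mul_rate_sub_rate_levelPower_le {γ p v : ℝ} (hγ : 0 < γ) (hp : 0 ≤ p) (hv : 0 ≤ v) :
    v * log 2 * (rate γ p - rate γ (levelPower γ v)) ≤ p - levelPower γ v := by
  have hpγ : 0 < 1 + p * γ := by positivity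
  rw [mul_assoc, mul_sub, log_two_mul_rate, log_two_mul_rate]
  rcases le_total v (1 / γ) with hv' | hv'
  · have hlog : log (1 + p * γ) ≤ p * γ := by linarith [log_le_sub_one_of_pos hpγ]
    rw [levelPower_eq_zero hv']
    calc v * (log (1 + p * γ) - log (1 + 0 * γ))
        = v * log (1 + p * γ) := by simp
      _ ≤ 1 / γ * (p * γ) := mul_le_mul hv' hlog (log_nonneg (by nlinarith)) (by positivity)
      _ = p - 0 := by field_simp; ring
  · have hpow : levelPower γ v = v - 1 / γ := max_eq_left (sub_nonneg.2 hv')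
    have hv0 : 0 < v := lt_of_lt_of_le (by positivity) hv'
    have hvγ : 0 < v * γ := by positivity
    set x := (1 + p * γ) / (v * γ)
    have hlog : log (1 + p * γ) - log (1 + levelPower γ v * γ) = log x := by
      rw [hpow, show 1 + (v - 1 / γ) * γ = v * γ by field_simp; ring, log_div hpγ.ne' hvγ.ne']
    calc v * (log (1 + p * γ) - log (1 + levelPower γ v * γ))
        = v * log x := by rw [hlog]
      _ ≤ v * (x - 1) := mul_le_mul_of_nonneg_left (log_le_sub_one_of_pos (by positivity)) hv
      _ = p - levelPower γ v := by rw [hpow]; simp only [x]; field_simp; ring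

lemma sum_levelPower_le_of_sum_rate_le {ι : Type*} (A : Finset ι) {γ p u : ι → ℝ} {v : ℝ}
    (hγ : ∀ l ∈ A, 0 < γ l) (hp : ∀ l ∈ A, 0 ≤ p l) (hv : 0 ≤ v)
    (hu : ∀ l ∈ A, u l = v ∨ levelPower (γ l) (u l) = p l)
    (hrate : ∑ l ∈ A, rate (γ l) (levelPower (γ l) (u l)) ≤ ∑ l ∈ A, rate (γ l) (p l)) :
    ∑ l ∈ A, levelPower (γ l) (u l) ≤ ∑ l ∈ A, p l := by
  have hslot : ∀ l ∈ A, v * log 2 * (rate (γ l) (p l) - rate (γ l) (levelPower (γ l) (u l)))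
      ≤ p l - levelPower (γ l) (u l) := by
    intro l hl
    rcases hu l hl with hul | hul
    · rw [hul]; exact mul_rate_sub_rate_levelPower_le (hγ l hl) (hp l hl) hv
    · simp [hul]
  have hsum := sum_le_sum hslot
  rw [← mul_sum, sum_sub_distrib, sum_sub_distrib] at hsum
  have : 0 ≤ v * log 2 * (∑ l ∈ A, rate (γ l) (p l) -
      ∑ l ∈ A, rate (γ l) (levelPower (γ l) (u l))) :=
    mul_nonneg (mul_nonneg hv (log_nonneg one_le_two)) (sub_nonneg.2 hrate)
  linarith

structure IsWaterFilling (N : ℕ) (γ ρ w : ℕ → ℝ) : Prop where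
  nonneg : ∀ l, 1 ≤ l → l ≤ N → 0 ≤ w l
  monotoneOn : MonotoneOn w (Set.Icc 1 N)
  energy_le : ∀ n ≤ N, ∑ l ∈ Icc 1 n, levelPower (γ l) (w l) ≤ ∑ l ∈ Icc 1 n, ρ l
  rate_le : ∀ n ≤ N,
    ∑ l ∈ Icc 1 n, rate (γ l) (levelPower (γ l) (w l)) ≤ ∑ l ∈ Icc 1 n, rate (γ l) (ρ l)
  rate_total :
    ∑ l ∈ Icc 1 N, rate (γ l) (levelPower (γ l) (w l)) = ∑ l ∈ Icc 1 N, rate (γ l) (ρ l)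

lemma isWaterFilling_zero (γ ρ w : ℕ → ℝ) : IsWaterFilling 0 γ ρ w where
  nonneg _ h₁ h₀ := by omega
  monotoneOn := (Set.subsingleton_Icc_of_ge zero_le_one).monotoneOn w
  energy_le n hn := by simp [Nat.le_zero.1 hn]
  rate_le n hn := by simp [Nat.le_zero.1 hn]
  rate_total := by simp

def capLevels (N : ℕ) (w : ℕ → ℝ) (v : ℝ) (l : ℕ) : ℝ := if l ≤ N then min (w l) v else v

lemma capLevels_le {N l : ℕ} (w : ℕ → ℝ) (v : ℝ) (hl : l ≤ N) : capLevels N w v l ≤ w l := by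
  simp [capLevels, hl]

lemma continuous_capLevels (N : ℕ) (w : ℕ → ℝ) (l : ℕ) : Continuous fun v => capLevels N w v l := by
  unfold capLevels; split_ifs <;> fun_prop

namespace IsWaterFilling

variable {N : ℕ} {γ ρ w : ℕ → ℝ}

lemma exists_capLevels_rate_eq (hw : IsWaterFilling N γ ρ w)
    (hγ : ∀ l, 1 ≤ l → l ≤ N + 1 → 0 < γ l) (hρ : ∀ l, 1 ≤ l → l ≤ N + 1 → 0 ≤ ρ l) :
    ∃ v, 0 ≤ v ∧ ∑ l ∈ Icc 1 (N + 1), rate (γ l) (levelPower (γ l) (capLevels N w v l)) =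
      ∑ l ∈ Icc 1 (N + 1), rate (γ l) (ρ l) := by
  set Φ := fun v => ∑ l ∈ Icc 1 (N + 1), rate (γ l) (levelPower (γ l) (capLevels N w v l))
  set M := max (w N) (ρ (N + 1) + 1 / γ (N + 1))
  have hγN : 0 < γ (N + 1) := hγ _ le_add_self le_rfl
  have hρN : 0 ≤ ρ (N + 1) := hρ _ le_add_self le_rfl
  have hM : 0 ≤ M := le_max_of_le_right (by positivity)
  have hΦ : Continuous Φ := continuous_finsetSum _ fun l hl =>
    (continuous_rate_levelPower (hγ l (mem_Icc.1 hl).1 (mem_Icc.1 hl).2).le).comp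
      (continuous_capLevels N w l)
  have hΦ0 : Φ 0 ≤ ∑ l ∈ Icc 1 (N + 1), rate (γ l) (ρ l) := by
    refine sum_le_sum fun l hl => ?_
    obtain ⟨hl₁, hl₂⟩ := mem_Icc.1 hl
    have hcap : capLevels N w 0 l ≤ 1 / γ l := by
      have : 0 < 1 / γ l := one_div_pos.2 (hγ l hl₁ hl₂)
      unfold capLevels; split_ifs <;> linarith [min_le_right (w l) 0]
    rw [levelPower_eq_zero hcap]
    exact rate_le_rate (hγ l hl₁ hl₂).le le_rfl (hρ l hl₁ hl₂)
  have hΦM : ∑ l ∈ Icc 1 (N + 1), rate (γ l) (ρ l) ≤ Φ M := by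
    have hcapM : ∀ l ∈ Icc 1 N, capLevels N w M l = w l := fun l hl => by
      obtain ⟨hl₁, hl₂⟩ := mem_Icc.1 hl
      have : w l ≤ M := le_max_of_le_left <|
        hw.monotoneOn ⟨hl₁, hl₂⟩ ⟨hl₁.trans hl₂, le_rfl⟩ hl₂
      simp [capLevels, hl₂, this]
    have hcapN : capLevels N w M (N + 1) = M := by simp [capLevels]
    calc ∑ l ∈ Icc 1 (N + 1), rate (γ l) (ρ l)
        = ∑ l ∈ Icc 1 N, rate (γ l) (levelPower (γ l) (w l)) +
            rate (γ (N + 1)) (levelPower (γ (N + 1)) (ρ (N + 1) + 1 / γ (N + 1))) := by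
          rw [sum_Icc_succ_top (Nat.le_add_left 1 N), hw.rate_total, levelPower_add_one_div hρN]
      _ ≤ ∑ l ∈ Icc 1 N, rate (γ l) (levelPower (γ l) (capLevels N w M l)) +
            rate (γ (N + 1)) (levelPower (γ (N + 1)) (capLevels N w M (N + 1))) := by
          rw [sum_congr rfl fun l hl =>
            congrArg (fun x => rate (γ l) (levelPower (γ l) x)) (hcapM l hl), hcapN]
          exact add_le_add_right (monotone_rate_levelPower hγN.le (le_max_right _ _)) _
      _ = Φ M := (sum_Icc_succ_top (Nat.le_add_left 1 N) _).symm
  obtain ⟨v, hv, hΦv⟩ := intermediate_value_Icc hM hΦ.continuousOn ⟨hΦ0, hΦM⟩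
  exact ⟨v, hv.1, hΦv⟩

lemma sum_levelPower_capLevels_le (hw : IsWaterFilling N γ ρ w)
    (hγ : ∀ l, 1 ≤ l → l ≤ N + 1 → 0 < γ l) (hρ : ∀ l, 1 ≤ l → l ≤ N + 1 → 0 ≤ ρ l)
    {v : ℝ} (hv : 0 ≤ v)
    (hrate : ∑ l ∈ Icc 1 (N + 1), rate (γ l) (levelPower (γ l) (capLevels N w v l)) =
      ∑ l ∈ Icc 1 (N + 1), rate (γ l) (ρ l)) :
    ∑ l ∈ Icc 1 (N + 1), levelPower (γ l) (capLevels N w v l) ≤ ∑ l ∈ Icc 1 (N + 1), ρ l := by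
  set p := fun l => if l ≤ N then levelPower (γ l) (w l) else ρ l
  have hsum_p : ∀ f : ℝ → ℝ → ℝ, ∑ l ∈ Icc 1 (N + 1), f (γ l) (p l) =
      ∑ l ∈ Icc 1 N, f (γ l) (levelPower (γ l) (w l)) + f (γ (N + 1)) (ρ (N + 1)) := by
    intro f
    rw [sum_Icc_succ_top (Nat.le_add_left 1 N)]
    congr 1
    · exact sum_congr rfl fun l hl => by simp [p, (mem_Icc.1 hl).2]
    · simp [p]
  have hblock : ∑ l ∈ Icc 1 (N + 1), levelPower (γ l) (capLevels N w v l) ≤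
      ∑ l ∈ Icc 1 (N + 1), p l := by
    refine sum_levelPower_le_of_sum_rate_le _
      (fun l hl => hγ l (mem_Icc.1 hl).1 (mem_Icc.1 hl).2) (fun l hl => ?_) hv
      (fun l _ => ?_) ?_
    · unfold p; split_ifs
      exacts [levelPower_nonneg _ _, hρ l (mem_Icc.1 hl).1 (mem_Icc.1 hl).2]
    · unfold capLevels p; split_ifs
      · rcases min_choice (w l) v with h | h <;> simp [h]
      · exact Or.inl rfl
    · rw [hrate, hsum_p rate, sum_Icc_succ_top (Nat.le_add_left 1 N), hw.rate_total]
  calc ∑ l ∈ Icc 1 (N + 1), levelPower (γ l) (capLevels N w v l)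
      ≤ ∑ l ∈ Icc 1 N, levelPower (γ l) (w l) + ρ (N + 1) :=
        hblock.trans_eq (hsum_p fun _ q => q)
    _ ≤ ∑ l ∈ Icc 1 (N + 1), ρ l := by
      rw [sum_Icc_succ_top (Nat.le_add_left 1 N)]
      exact add_le_add_left (hw.energy_le N le_rfl) _

lemma capLevels_succ (hw : IsWaterFilling N γ ρ w)
    (hγ : ∀ l, 1 ≤ l → l ≤ N + 1 → 0 < γ l) (hρ : ∀ l, 1 ≤ l → l ≤ N + 1 → 0 ≤ ρ l)
    {v : ℝ} (hv : 0 ≤ v)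
    (hrate : ∑ l ∈ Icc 1 (N + 1), rate (γ l) (levelPower (γ l) (capLevels N w v l)) =
      ∑ l ∈ Icc 1 (N + 1), rate (γ l) (ρ l)) :
    IsWaterFilling (N + 1) γ ρ (capLevels N w v) where
  nonneg l hl₁ hl₂ := by
    unfold capLevels; split_ifs with hlN
    exacts [le_min (hw.nonneg l hl₁ hlN) hv, hv]
  monotoneOn a ha b hb hab := by
    unfold capLevels; split_ifs with haN hbN hbN
    · exact min_le_min_right v (hw.monotoneOn ⟨ha.1, haN⟩ ⟨hb.1, hbN⟩ hab)
    · exact min_le_right _ _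
    · omega
    · exact le_rfl
  energy_le n hn := by
    rcases Nat.le_succ_iff.1 hn with hn | rfl
    · refine le_trans (sum_le_sum fun l hl => ?_) (hw.energy_le n hn)
      exact levelPower_mono _ (capLevels_le w v ((mem_Icc.1 hl).2.trans hn))
    · exact hw.sum_levelPower_capLevels_le hγ hρ hv hrate
  rate_le n hn := by
    rcases Nat.le_succ_iff.1 hn with hn | rfl
    · refine le_trans (sum_le_sum fun l hl => ?_) (hw.rate_le n hn)
      obtain ⟨hl₁, hl₂⟩ := mem_Icc.1 hl
      exact monotone_rate_levelPower (hγ l hl₁ (by omega)).le (capLevels_le w v (hl₂.trans hn))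
    · exact hrate.le
  rate_total := hrate

end IsWaterFilling

lemma exists_isWaterFilling (N : ℕ) (γ ρ : ℕ → ℝ) (hγ : ∀ l, 1 ≤ l → l ≤ N → 0 < γ l)
    (hρ : ∀ l, 1 ≤ l → l ≤ N → 0 ≤ ρ l) : ∃ w, IsWaterFilling N γ ρ w := by
  induction N with
  | zero => exact ⟨0, isWaterFilling_zero γ ρ 0⟩
  | succ N ih =>
    obtain ⟨w, hw⟩ :=
      ih (fun l hl₁ hl₂ => hγ l hl₁ (by omega)) (fun l hl₁ hl₂ => hρ l hl₁ (by omega))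
    obtain ⟨v, hv, hrate⟩ := hw.exists_capLevels_rate_eq hγ hρ
    exact ⟨_, hw.capLevels_succ hγ hρ hv hrate⟩

theorem stmt_0_general (N : ℕ) (γ H B ρ : ℕ → ℝ) (s W e₁ b₁ : ℝ)
    (hγ : ∀ l, 1 ≤ l → l ≤ N → 0 < γ l) (hs : 0 < s) (hW : 0 < W)
    (hρ : ∀ l, 1 ≤ l → l ≤ N → 0 ≤ ρ l)
    (hfeas : ∀ n, 1 ≤ n → n ≤ N →
      s * ∑ l ∈ Finset.Icc 1 n, ρ l ≤ e₁ + ∑ l ∈ Finset.Icc 2 n, H l ∧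
      ∑ l ∈ Finset.Icc 1 n, s * W * Real.logb 2 (1 + ρ l * γ l) ≤
        b₁ + ∑ l ∈ Finset.Icc 2 n, B l) :
    ∃ w : ℕ → ℝ,
      (∀ l, 1 ≤ l → l ≤ N → 0 ≤ w l) ∧
      (∀ l, 1 ≤ l → l + 1 ≤ N → w l ≤ w (l + 1)) ∧
      (∀ n, 1 ≤ n → n ≤ N →
        s * ∑ l ∈ Finset.Icc 1 n, max (w l - 1 / γ l) 0 ≤
          e₁ + ∑ l ∈ Finset.Icc 2 n, H l ∧
        ∑ l ∈ Finset.Icc 1 n,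
            s * W * Real.logb 2 (1 + max (w l - 1 / γ l) 0 * γ l) ≤
          b₁ + ∑ l ∈ Finset.Icc 2 n, B l) ∧
      (∑ l ∈ Finset.Icc 1 N, s * W * Real.logb 2 (1 + ρ l * γ l) ≤
        ∑ l ∈ Finset.Icc 1 N,
          s * W * Real.logb 2 (1 + max (w l - 1 / γ l) 0 * γ l)) ∧
      (s * ∑ l ∈ Finset.Icc 1 N, max (w l - 1 / γ l) 0 ≤
        s * ∑ l ∈ Finset.Icc 1 N, ρ l) := by
  obtain ⟨w, hw⟩ := exists_isWaterFilling N γ ρ hγ hρ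
  have hsW : 0 ≤ s * W := (mul_pos hs hW).le
  refine ⟨w, hw.nonneg, fun l hl hlN => hw.monotoneOn ⟨hl, by omega⟩ ⟨by omega, hlN⟩ l.le_succ,
    fun n hn hnN => ⟨?_, ?_⟩, ?_, mul_le_mul_of_nonneg_left (hw.energy_le N le_rfl) hs.le⟩
  · exact (mul_le_mul_of_nonneg_left (hw.energy_le n hnN) hs.le).trans (hfeas n hn hnN).1
  · have hdata := (hfeas n hn hnN).2
    rw [← mul_sum] at hdata ⊢
    exact (mul_le_mul_of_nonneg_left (hw.rate_le n hnN) hsW).trans hdata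
  · rw [← mul_sum, ← mul_sum]
    exact mul_le_mul_of_nonneg_left hw.rate_total.ge hsW

/-- For every feasible power allocation there is a feasible allocation
induced by a nondecreasing sequence of nonnegative water levels with at least the
same total throughput and at most the same total energy. -/
theorem stmt_0 (N : ℕ) (hN : 1 ≤ N) (γ H B ρ : ℕ → ℝ) (s W e₁ b₁ : ℝ)
    (hγ : ∀ l, 1 ≤ l → l ≤ N → 0 < γ l) (hs : 0 < s) (hW : 0 < W)
    (he₁ : 0 ≤ e₁) (hH : ∀ l, 2 ≤ l → l ≤ N → 0 ≤ H l)
    (hb₁ : 0 ≤ b₁) (hB : ∀ l, 2 ≤ l → l ≤ N → 0 ≤ B l)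
    (hρ : ∀ l, 1 ≤ l → l ≤ N → 0 ≤ ρ l)
    (hfeas : ∀ n, 1 ≤ n → n ≤ N →
      s * ∑ l ∈ Finset.Icc 1 n, ρ l ≤ e₁ + ∑ l ∈ Finset.Icc 2 n, H l ∧
      ∑ l ∈ Finset.Icc 1 n, s * W * Real.logb 2 (1 + ρ l * γ l) ≤
        b₁ + ∑ l ∈ Finset.Icc 2 n, B l) :
    ∃ w : ℕ → ℝ,
      (∀ l, 1 ≤ l → l ≤ N → 0 ≤ w l) ∧
      (∀ l, 1 ≤ l → l + 1 ≤ N → w l ≤ w (l + 1)) ∧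
      (∀ n, 1 ≤ n → n ≤ N →
        s * ∑ l ∈ Finset.Icc 1 n, max (w l - 1 / γ l) 0 ≤
          e₁ + ∑ l ∈ Finset.Icc 2 n, H l ∧
        ∑ l ∈ Finset.Icc 1 n,
            s * W * Real.logb 2 (1 + max (w l - 1 / γ l) 0 * γ l) ≤
          b₁ + ∑ l ∈ Finset.Icc 2 n, B l) ∧
      (∑ l ∈ Finset.Icc 1 N, s * W * Real.logb 2 (1 + ρ l * γ l) ≤
        ∑ l ∈ Finset.Icc 1 N,
          s * W * Real.logb 2 (1 + max (w l - 1 / γ l) 0 * γ l)) ∧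
      (s * ∑ l ∈ Finset.Icc 1 N, max (w l - 1 / γ l) 0 ≤
        s * ∑ l ∈ Finset.Icc 1 N, ρ l) :=
  stmt_0_general N γ H B ρ s W e₁ b₁ hγ hs hW hρ hfeas
end

section
/- Let γ₁, γ₂ > 0 and let w₁ > w₂ ≥ 0 be two water levels. Then there exists a common water level w with w₂ ≤ w ≤ w₁ such that max(w − 1/γ₁, 0) + max(w − 1/γ₂, 0) = max(w₁ − 1/γ₁, 0) + max(w₂ − 1/γ₂, 0) (the total consumed energy is preserved) and max(log₂(w·γ₁), 0) + max(log₂(w·γ₂), 0) ≥ max(log₂(w₁·γ₁), 0) + max(log₂(w₂·γ₂), 0) (the total throughput does not decrease). In particular, since w ≤ w₁, the energy consumed in the first slot does not increase: max(w − 1/γ₁, 0) ≤ max(w₁ − 1/γ₁, 0). -/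
lemma thr_eq (v γ : ℝ) (hv : 0 ≤ v) (hγ : 0 < γ) :
    max (Real.logb 2 (v * γ)) 0 = Real.logb 2 (max v (1/γ) * γ) := by
  have h1 : max v (1/γ) * γ = max (v * γ) 1 := by
    rw [max_mul_of_nonneg _ _ hγ.le, one_div, inv_mul_cancel₀ hγ.ne']
  rw [h1]
  rcases le_total (v * γ) 1 with h | h
  · rw [max_eq_right h, Real.logb_one, max_eq_right]
    exact Real.logb_nonpos one_lt_two (by positivity) h
  · rw [max_eq_left h, max_eq_left]
    exact Real.logb_nonneg one_lt_two h

lemma maxsub (v c : ℝ) : max (v - c) 0 = max v c - c := by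
  rcases le_total v c with h | h
  · rw [max_eq_right (by linarith), max_eq_right h]; ring
  · rw [max_eq_left (by linarith), max_eq_left h]

/-- Two distinct water levels can be replaced by a common intermediate
water level preserving total energy, not decreasing total throughput, and not
increasing the energy consumed in the first slot. -/
theorem stmt_1 (γ₁ γ₂ w₁ w₂ : ℝ) (hγ₁ : 0 < γ₁) (hγ₂ : 0 < γ₂)
    (hw₂ : 0 ≤ w₂) (hlt : w₂ < w₁) :
    ∃ w : ℝ, w₂ ≤ w ∧ w ≤ w₁ ∧
      max (w - 1 / γ₁) 0 + max (w - 1 / γ₂) 0 =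
        max (w₁ - 1 / γ₁) 0 + max (w₂ - 1 / γ₂) 0 ∧
      max (Real.logb 2 (w₁ * γ₁)) 0 + max (Real.logb 2 (w₂ * γ₂)) 0 ≤
        max (Real.logb 2 (w * γ₁)) 0 + max (Real.logb 2 (w * γ₂)) 0 ∧
      max (w - 1 / γ₁) 0 ≤ max (w₁ - 1 / γ₁) 0 := by
  set a := 1/γ₁ with ha
  set b := 1/γ₂ with hb
  have ha0 : 0 < a := by positivity
  have hb0 : 0 < b := by positivity
  have hw₁ : 0 < w₁ := lt_of_le_of_lt hw₂ hlt
  set f : ℝ → ℝ := fun v => max (v - a) 0 + max (v - b) 0 with hf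
  have hcont : ContinuousOn f (Set.Icc w₂ w₁) := by fun_prop
  set T : ℝ := max (w₁ - a) 0 + max (w₂ - b) 0 with hT
  have hmem : T ∈ Set.Icc (f w₂) (f w₁) := by
    constructor
    · have : max (w₂ - a) 0 ≤ max (w₁ - a) 0 := max_le_max (by linarith) le_rfl
      simp only [hf, hT]; linarith
    · have : max (w₂ - b) 0 ≤ max (w₁ - b) 0 := max_le_max (by linarith) le_rfl
      simp only [hf, hT]; linarith
  obtain ⟨w, hwIcc, hwE⟩ := intermediate_value_Icc hlt.le hcont hmem
  obtain ⟨hw2w, hww1⟩ := hwIcc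
  have hw0 : 0 ≤ w := le_trans hw₂ hw2w
  refine ⟨w, hw2w, hww1, hwE, ?_, max_le_max (by linarith) le_rfl⟩
  -- throughput
  set x := max w a with hx
  set y := max w b with hy
  set X := max w₁ a with hX
  set Y := max w₂ b with hY
  have hE' : x + y = X + Y := by
    have e1 := maxsub w a; have e2 := maxsub w b
    have e3 := maxsub w₁ a; have e4 := maxsub w₂ b
    simp only [hf, hT] at hwE
    rw [e1, e2, e3, e4] at hwE; linarith
  have hx0 : 0 < x := lt_of_lt_of_le ha0 (le_max_right _ _)
  have hy0 : 0 < y := lt_of_lt_of_le hb0 (le_max_right _ _)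
  have hX0 : 0 < X := lt_of_lt_of_le ha0 (le_max_right _ _)
  have hY0 : 0 < Y := lt_of_lt_of_le hb0 (le_max_right _ _)
  have hxX : x ≤ X := max_le_max hww1 le_rfl
  have hYy : Y ≤ y := max_le_max hw2w le_rfl
  have hkey : X * Y ≤ x * y := by
    rcases eq_or_lt_of_le hxX with h0 | h0
    · have : Y = y := by linarith
      rw [h0, this]
    · have hby : b < y := by
        have : Y < y := by linarith
        exact lt_of_le_of_lt (le_max_right w₂ b) this
      have hyw : y = w := by
        by_contra h
        have hwb : w ≤ b := by
          by_contra h2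
          exact h (max_eq_left (le_of_not_ge h2))
        rw [hy, max_eq_right hwb] at hby
        exact lt_irrefl _ hby
      have hyX : y ≤ X := by
        rw [hyw]; exact le_trans hww1 (le_max_left w₁ a)
      nlinarith [mul_le_mul_of_nonneg_left hyX (sub_nonneg.2 hxX)]
  rw [thr_eq w₁ γ₁ hw₁.le hγ₁, thr_eq w₂ γ₂ hw₂ hγ₂, thr_eq w γ₁ hw0 hγ₁,
    thr_eq w γ₂ hw0 hγ₂]
  rw [← Real.logb_mul (by positivity) (by positivity),
    ← Real.logb_mul (by positivity) (by positivity)]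
  apply Real.logb_le_logb_of_le one_lt_two (by positivity)
  calc max w₁ a * γ₁ * (max w₂ b * γ₂) = (X * Y) * (γ₁ * γ₂) := by ring
    _ ≤ (x * y) * (γ₁ * γ₂) := mul_le_mul_of_nonneg_right hkey (by positivity)
    _ = max w a * γ₁ * (max w b * γ₂) := by ring
end

section
/- Let γ₁, γ₂ > 0 and let w₁ > w₂ ≥ 0 be two water levels with max(log₂(w₁·γ₁), 0) + max(log₂(w₂·γ₂), 0) > 0. Then there exists a common water level w with w₂ ≤ w ≤ w₁ such that max(log₂(w·γ₁), 0) + max(log₂(w·γ₂), 0) = max(log₂(w₁·γ₁), 0) + max(log₂(w₂·γ₂), 0) (the total throughput is preserved) and max(w − 1/γ₁, 0) + max(w − 1/γ₂, 0) ≤ max(w₁ − 1/γ₁, 0) + max(w₂ − 1/γ₂, 0) (the total consumed energy does not increase). -/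
/-!
Clip each level at the slot's threshold: with `m = max w (1/γ)` the throughput is
`logb 2 (m * γ)` and the energy is `m - 1/γ`. Preserving the total throughput then means
preserving the product `m₁ * m₂`, and the intermediate value theorem gives a common level `w`
between `w₂` and `w₁` doing so. Of two positive numbers with a fixed product, the sum is smaller
the closer they are, and moving both levels to `w` brings the clipped levels closer together.
-/

open Real

lemma max_logb_mul_eq_logb_max_mul {γ w : ℝ} (hγ : 0 < γ) (hw : 0 ≤ w) :
    max (logb 2 (w * γ)) 0 = logb 2 (max w (1 / γ) * γ) := by
  rcases le_or_gt (1 / γ) w with h | h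
  · rw [max_eq_left h, max_eq_left]
    exact logb_nonneg one_lt_two ((div_le_iff₀ hγ).mp h)
  · rw [max_eq_right h.le, one_div_mul_cancel hγ.ne', logb_one, max_eq_right]
    exact logb_nonpos one_lt_two (by positivity) ((lt_div_iff₀ hγ).mp h).le

lemma max_sub_zero_eq_max_sub (w a : ℝ) : max (w - a) 0 = max w a - a := by
  rw [← max_sub_sub_right, sub_self]

lemma exists_mem_Icc_max_mul_max_eq {a₁ a₂ w₁ w₂ : ℝ} (ha₁ : 0 < a₁) (ha₂ : 0 < a₂)
    (hw : w₂ ≤ w₁) :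
    ∃ w ∈ Set.Icc w₂ w₁, max w a₁ * max w a₂ = max w₁ a₁ * max w₂ a₂ := by
  have hpos : ∀ {u a : ℝ}, 0 < a → 0 < max u a := fun ha => lt_max_of_lt_right ha
  have hcont : Continuous fun w : ℝ => max w a₁ * max w a₂ := by fun_prop
  refine intermediate_value_Icc hw hcont.continuousOn ⟨?_, ?_⟩
  · exact mul_le_mul_of_nonneg_right (max_le_max_right _ hw) (hpos ha₂).le
  · exact mul_le_mul_of_nonneg_left (max_le_max_right _ hw) (hpos ha₁).le

lemma add_le_add_of_mul_eq {x₁ x₂ y₁ y₂ : ℝ} (hx₁ : 0 < x₁) (hprod : x₁ * x₂ = y₁ * y₂)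
    (h₁ : x₁ ≤ y₁) (h₂ : y₂ ≤ x₁ ∨ x₁ = y₁) : x₁ + x₂ ≤ y₁ + y₂ := by
  have key : x₁ * (y₁ + y₂ - (x₁ + x₂)) = (y₁ - x₁) * (x₁ - y₂) := by
    linear_combination -hprod
  have : 0 ≤ (y₁ - x₁) * (x₁ - y₂) := by
    rcases h₂ with h₂ | h₂
    · exact mul_nonneg (sub_nonneg.mpr h₁) (sub_nonneg.mpr h₂)
    · simp [h₂]
  nlinarith

lemma max_add_max_le_of_mul_eq {a₁ a₂ w w₁ w₂ : ℝ} (ha₁ : 0 < a₁) (ha₂ : 0 < a₂)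
    (hw₂ : w₂ ≤ w) (hw₁ : w ≤ w₁) (hprod : max w a₁ * max w a₂ = max w₁ a₁ * max w₂ a₂) :
    max w a₁ + max w a₂ ≤ max w₁ a₁ + max w₂ a₂ := by
  refine add_le_add_of_mul_eq (lt_max_of_lt_right ha₁) hprod (max_le_max_right _ hw₁) ?_
  rcases (max_le_max_right a₂ hw₂).lt_or_eq with hlt | heq
  · left
    have hx₂ : max w a₂ = w :=
      max_eq_left (not_lt.mp fun h => hlt.not_ge ((max_eq_right h.le).trans_le (le_max_right _ _)))
    exact (hx₂ ▸ hlt).le.trans (le_max_left _ _)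
  · right
    rw [← heq] at hprod
    exact mul_right_cancel₀ (lt_max_of_lt_right ha₂).ne' hprod

theorem stmt_2_general (γ₁ γ₂ w₁ w₂ : ℝ) (hγ₁ : 0 < γ₁) (hγ₂ : 0 < γ₂)
    (hw₂ : 0 ≤ w₂) (hlt : w₂ < w₁) :
    ∃ w : ℝ, w₂ ≤ w ∧ w ≤ w₁ ∧
      max (Real.logb 2 (w * γ₁)) 0 + max (Real.logb 2 (w * γ₂)) 0 =
        max (Real.logb 2 (w₁ * γ₁)) 0 + max (Real.logb 2 (w₂ * γ₂)) 0 ∧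
      max (w - 1 / γ₁) 0 + max (w - 1 / γ₂) 0 ≤
        max (w₁ - 1 / γ₁) 0 + max (w₂ - 1 / γ₂) 0 := by
  have ha₁ : 0 < 1 / γ₁ := by positivity
  have ha₂ : 0 < 1 / γ₂ := by positivity
  obtain ⟨w, ⟨hw₂w, hww₁⟩, hprod⟩ := exists_mem_Icc_max_mul_max_eq ha₁ ha₂ hlt.le
  have hw : 0 ≤ w := hw₂.trans hw₂w
  refine ⟨w, hw₂w, hww₁, ?_, ?_⟩
  · have hlogb : ∀ {x₁ x₂ : ℝ}, 0 < x₁ → 0 < x₂ →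
        logb 2 (x₁ * γ₁) + logb 2 (x₂ * γ₂) = logb 2 (x₁ * x₂ * (γ₁ * γ₂)) := fun h₁ h₂ => by
      rw [← logb_mul (by positivity) (by positivity)]
      ring_nf
    rw [max_logb_mul_eq_logb_max_mul hγ₁ hw, max_logb_mul_eq_logb_max_mul hγ₂ hw,
      max_logb_mul_eq_logb_max_mul hγ₁ (hw.trans hww₁), max_logb_mul_eq_logb_max_mul hγ₂ hw₂,
      hlogb (lt_max_of_lt_right ha₁) (lt_max_of_lt_right ha₂),
      hlogb (lt_max_of_lt_right ha₁) (lt_max_of_lt_right ha₂), hprod]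
  · simp only [max_sub_zero_eq_max_sub]
    linarith [max_add_max_le_of_mul_eq ha₁ ha₂ hw₂w hww₁ hprod]

/-- Two distinct water levels with positive total throughput can be
replaced by a common intermediate water level preserving the total throughput and
not increasing the total consumed energy. -/
theorem stmt_2 (γ₁ γ₂ w₁ w₂ : ℝ) (hγ₁ : 0 < γ₁) (hγ₂ : 0 < γ₂)
    (hw₂ : 0 ≤ w₂) (hlt : w₂ < w₁)
    (hpos : 0 < max (Real.logb 2 (w₁ * γ₁)) 0 + max (Real.logb 2 (w₂ * γ₂)) 0) :
    ∃ w : ℝ, w₂ ≤ w ∧ w ≤ w₁ ∧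
      max (Real.logb 2 (w * γ₁)) 0 + max (Real.logb 2 (w * γ₂)) 0 =
        max (Real.logb 2 (w₁ * γ₁)) 0 + max (Real.logb 2 (w₂ * γ₂)) 0 ∧
      max (w - 1 / γ₁) 0 + max (w - 1 / γ₂) 0 ≤
        max (w₁ - 1 / γ₁) 0 + max (w₂ - 1 / γ₂) 0 :=
  stmt_2_general γ₁ γ₂ w₁ w₂ hγ₁ hγ₂ hw₂ hlt
end

section
/- Let γ₁, γ₂ > 0, let E ≥ 0, and let w ≥ 0 satisfy max(w − 1/γ₁, 0) + max(w − 1/γ₂, 0) = E. Then for all e₁, e₂ ≥ 0 with e₁ + e₂ = E, it holds that log₂(1 + e₁·γ₁) + log₂(1 + e₂·γ₂) ≤ log₂(1 + max(w − 1/γ₁, 0)·γ₁) + log₂(1 + max(w − 1/γ₂, 0)·γ₂); that is, among all splits of the total energy E between two slots with gains γ₁ and γ₂, the water-filling split with a common water level maximizes the total throughput. -/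
lemma wf_aux1 (γ₁ γ₂ e₁ e₂ : ℝ) (he₂ : 0 ≤ e₂)
    (hfac : γ₂ * (1 + e₁ * γ₁) ≤ γ₁) :
    (1 + e₁ * γ₁) * (1 + e₂ * γ₂) ≤ (1 + (e₁ + e₂) * γ₁) * (1 + 0 * γ₂) := by
  nlinarith [mul_nonneg he₂ (sub_nonneg.mpr hfac)]

lemma wf_aux2 (γ₁ γ₂ e₁ e₂ : ℝ) (he₁ : 0 ≤ e₁)
    (hfac : γ₁ * (1 + e₂ * γ₂) ≤ γ₂) :
    (1 + e₁ * γ₁) * (1 + e₂ * γ₂) ≤ (1 + 0 * γ₁) * (1 + (e₁ + e₂) * γ₂) := by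
  nlinarith [mul_nonneg he₁ (sub_nonneg.mpr hfac)]

lemma wf_aux3 (γ₁ γ₂ x y : ℝ) (hγ₁ : 0 < γ₁) (hγ₂ : 0 < γ₂) :
    γ₁ * x * (γ₂ * y) ≤ ((x + y) / 2) * γ₁ * (((x + y) / 2) * γ₂) := by
  nlinarith [mul_nonneg (mul_pos hγ₁ hγ₂).le (sq_nonneg (x - y))]


/-- Among all splits of a total energy E between two slots with gains
γ₁ and γ₂, the water-filling split with a common water level maximizes the total
throughput. -/
theorem stmt_3 (γ₁ γ₂ E w : ℝ) (hγ₁ : 0 < γ₁) (hγ₂ : 0 < γ₂)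
    (hE : 0 ≤ E) (hw : 0 ≤ w)
    (hsplit : max (w - 1 / γ₁) 0 + max (w - 1 / γ₂) 0 = E) :
    ∀ e₁ e₂ : ℝ, 0 ≤ e₁ → 0 ≤ e₂ → e₁ + e₂ = E →
      Real.logb 2 (1 + e₁ * γ₁) + Real.logb 2 (1 + e₂ * γ₂) ≤
        Real.logb 2 (1 + max (w - 1 / γ₁) 0 * γ₁) +
          Real.logb 2 (1 + max (w - 1 / γ₂) 0 * γ₂) := by
  intro e₁ e₂ he₁ he₂ hsum
  set b₁ : ℝ := 1 / γ₁ with hb₁def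
  set b₂ : ℝ := 1 / γ₂ with hb₂def
  have hb₁ : γ₁ * b₁ = 1 := by rw [hb₁def]; field_simp
  have hb₂ : γ₂ * b₂ = 1 := by rw [hb₂def]; field_simp
  have hb₁pos : 0 < b₁ := by rw [hb₁def]; positivity
  have hb₂pos : 0 < b₂ := by rw [hb₂def]; positivity
  set a₁ : ℝ := max (w - b₁) 0 with ha₁def
  set a₂ : ℝ := max (w - b₂) 0 with ha₂def
  have ha₁0 : 0 ≤ a₁ := le_max_right _ _
  have ha₂0 : 0 ≤ a₂ := le_max_right _ _
  have p1 : 0 < 1 + e₁ * γ₁ := by nlinarith [mul_nonneg he₁ hγ₁.le]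
  have p2 : 0 < 1 + e₂ * γ₂ := by nlinarith [mul_nonneg he₂ hγ₂.le]
  have q1 : 0 < 1 + a₁ * γ₁ := by nlinarith [mul_nonneg ha₁0 hγ₁.le]
  have q2 : 0 < 1 + a₂ * γ₂ := by nlinarith [mul_nonneg ha₂0 hγ₂.le]
  have key : (1 + e₁ * γ₁) * (1 + e₂ * γ₂) ≤ (1 + a₁ * γ₁) * (1 + a₂ * γ₂) := by
    rcases le_or_gt (w - b₁) 0 with h1 | h1
    · have ha₁ : a₁ = 0 := max_eq_right h1
      rcases le_or_gt (w - b₂) 0 with h2 | h2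
      · -- both inactive: E = 0
        have ha₂ : a₂ = 0 := max_eq_right h2
        have hE0 : E = 0 := by rw [← hsplit, ha₁, ha₂]; ring
        have he₁0 : e₁ = 0 := by linarith
        have he₂0 : e₂ = 0 := by linarith
        simp [ha₁, ha₂, he₁0, he₂0]
      · -- slot 2 active only
        have ha₂ : a₂ = w - b₂ := max_eq_left h2.le
        have hEeq : w - b₂ = E := by rw [ha₁, ha₂] at hsplit; linarith
        have hwpos : 0 < w := by linarith
        have hγ₁w : γ₁ * w ≤ 1 := by nlinarith
        have hγ₂w : γ₂ * w = 1 + E * γ₂ := by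
          linear_combination γ₂ * hEeq + hb₂
        rw [ha₁, ha₂, hEeq]
        have hfac : γ₁ * (1 + e₂ * γ₂) ≤ γ₂ := by
          have h1' : γ₁ * (1 + e₂ * γ₂) ≤ γ₁ * (1 + E * γ₂) :=
            mul_le_mul_of_nonneg_left (by nlinarith) hγ₁.le
          have h2' : γ₁ * (1 + E * γ₂) = γ₂ * (γ₁ * w) := by
            rw [← hγ₂w]; ring
          have h3' : γ₂ * (γ₁ * w) ≤ γ₂ * 1 := mul_le_mul_of_nonneg_left hγ₁w hγ₂.le
          linarith [mul_one γ₂]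
        rw [← hsum]
        exact wf_aux2 γ₁ γ₂ e₁ e₂ he₁ hfac
    · have ha₁ : a₁ = w - b₁ := max_eq_left h1.le
      rcases le_or_gt (w - b₂) 0 with h2 | h2
      · -- slot 1 active only (symmetric)
        have ha₂ : a₂ = 0 := max_eq_right h2
        have hEeq : w - b₁ = E := by rw [ha₁, ha₂] at hsplit; linarith
        have hwpos : 0 < w := by linarith
        have hγ₂w : γ₂ * w ≤ 1 := by nlinarith
        have hγ₁w : γ₁ * w = 1 + E * γ₁ := by
          linear_combination γ₁ * hEeq + hb₁
        rw [ha₁, ha₂, hEeq]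
        have hfac : γ₂ * (1 + e₁ * γ₁) ≤ γ₁ := by
          have h1' : γ₂ * (1 + e₁ * γ₁) ≤ γ₂ * (1 + E * γ₁) :=
            mul_le_mul_of_nonneg_left (by nlinarith) hγ₂.le
          have h2' : γ₂ * (1 + E * γ₁) = γ₁ * (γ₂ * w) := by
            rw [← hγ₁w]; ring
          have h3' : γ₁ * (γ₂ * w) ≤ γ₁ * 1 := mul_le_mul_of_nonneg_left hγ₂w hγ₁.le
          linarith [mul_one γ₁]
        rw [← hsum]
        exact wf_aux1 γ₁ γ₂ e₁ e₂ he₂ hfac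
      · -- both active
        have ha₂ : a₂ = w - b₂ := max_eq_left h2.le
        have hEeq : (w - b₁) + (w - b₂) = E := by rw [ha₁, ha₂] at hsplit; linarith
        rw [ha₁, ha₂]
        have r1 : 1 + (w - b₁) * γ₁ = w * γ₁ := by linear_combination -hb₁
        have r2 : 1 + (w - b₂) * γ₂ = w * γ₂ := by linear_combination -hb₂
        have l1 : 1 + e₁ * γ₁ = γ₁ * (b₁ + e₁) := by linear_combination -hb₁
        have l2 : 1 + e₂ * γ₂ = γ₂ * (b₂ + e₂) := by linear_combination -hb₂
        rw [r1, r2, l1, l2]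
        have hw' : w = ((b₁ + e₁) + (b₂ + e₂)) / 2 := by linarith
        rw [hw']
        exact wf_aux3 γ₁ γ₂ (b₁ + e₁) (b₂ + e₂) hγ₁ hγ₂
  calc Real.logb 2 (1 + e₁ * γ₁) + Real.logb 2 (1 + e₂ * γ₂)
      = Real.logb 2 ((1 + e₁ * γ₁) * (1 + e₂ * γ₂)) :=
        (Real.logb_mul p1.ne' p2.ne').symm
    _ ≤ Real.logb 2 ((1 + a₁ * γ₁) * (1 + a₂ * γ₂)) :=
        Real.logb_le_logb_of_le (by norm_num) (mul_pos p1 p2) key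
    _ = Real.logb 2 (1 + a₁ * γ₁) + Real.logb 2 (1 + a₂ * γ₂) :=
        Real.logb_mul q1.ne' q2.ne'
end

section
/- Let m ≥ 1, let γ_l > 0 for l = 1,…,m be channel gains, let s > 0, W > 0, and let D be a real number. Then for every real w > 0, the data constraint ∑_{l=1}^m s·W·log₂(1 + max(w − 1/γ_l, 0)·γ_l) ≤ D holds if and only if log₂(w) ≤ (D + s·W·∑_{l=1}^m log₂(min(1/γ_l, w))) / (s·W·m). -/
/-! With `a = min (1/γ) w`, the rate of a slot is `log₂ (w / a)`: above the cutoff `1/γ` the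
power `w - 1/γ` gives `1 + (w - 1/γ) γ = w γ`, below it the slot is silent and `w / w = 1`.
Summing, the constraint becomes linear in `log₂ w`, and dividing by `s W m > 0` solves it. -/

open Finset

lemma one_add_max_sub_inv_mul_eq_div_min {γ w : ℝ} (hγ : 0 < γ) (hw : 0 < w) :
    1 + max (w - 1 / γ) 0 * γ = w / min (1 / γ) w := by
  rcases le_or_gt (1 / γ) w with h | h
  · rw [max_eq_left (by linarith), min_eq_left h]
    field_simp
    ring
  · rw [max_eq_right (by linarith), min_eq_right h.le, div_self hw.ne']
    ring

lemma logb_one_add_max_sub_inv_mul {b γ w : ℝ} (hγ : 0 < γ) (hw : 0 < w) :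
    Real.logb b (1 + max (w - 1 / γ) 0 * γ) = Real.logb b w - Real.logb b (min (1 / γ) w) := by
  rw [one_add_max_sub_inv_mul_eq_div_min hγ hw,
    Real.logb_div hw.ne' (lt_min (by positivity) hw).ne']

lemma Finset.sum_mul_sub_le_iff_le_div {ι : Type*} {t : Finset ι} (ht : t.Nonempty)
    {c x D : ℝ} (hc : 0 < c) (a : ι → ℝ) :
    ∑ i ∈ t, c * (x - a i) ≤ D ↔ x ≤ (D + c * ∑ i ∈ t, a i) / (c * #t) := by
  have hct : 0 < c * #t := mul_pos hc (by exact_mod_cast ht.card_pos)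
  have hsum : ∑ i ∈ t, c * (x - a i) = c * #t * x - c * ∑ i ∈ t, a i := by
    rw [← mul_sum, sum_sub_distrib, sum_const, nsmul_eq_mul]
    ring
  rw [hsum, le_div_iff₀ hct]
  constructor <;> intro h <;> linarith

/-- The block data constraint for a common water level w > 0 is
equivalent to an explicit upper bound on log₂ w. -/
theorem stmt_6 (m : ℕ) (hm : 1 ≤ m) (γ : ℕ → ℝ)
    (hγ : ∀ l, 1 ≤ l → l ≤ m → 0 < γ l) (s W D w : ℝ)
    (hs : 0 < s) (hW : 0 < W) (hw : 0 < w) :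
    (∑ l ∈ Finset.Icc 1 m,
        s * W * Real.logb 2 (1 + max (w - 1 / γ l) 0 * γ l) ≤ D) ↔
      Real.logb 2 w ≤
        (D + s * W * ∑ l ∈ Finset.Icc 1 m, Real.logb 2 (min (1 / γ l) w)) /
          (s * W * m) := by
  have hrate : ∀ l ∈ Icc 1 m, s * W * Real.logb 2 (1 + max (w - 1 / γ l) 0 * γ l)
      = s * W * (Real.logb 2 w - Real.logb 2 (min (1 / γ l) w)) := fun l hl => by
    obtain ⟨hl₁, hl₂⟩ := mem_Icc.mp hl
    rw [logb_one_add_max_sub_inv_mul (hγ l hl₁ hl₂) hw]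
  rw [sum_congr rfl hrate,
    sum_mul_sub_le_iff_le_div (nonempty_Icc.mpr hm) (mul_pos hs hW), Nat.card_Icc,
    Nat.add_sub_cancel]
end
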